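/- Let h(x) = (x²−1)²/4 and let f be the clipped loss with parameters 1 < a < b. There exists a constant A ≥ 1 such that for all a ≥ A and b ≥ 2a: (1) f is continuously differentiable on ℝ with sup_{x∈ℝ} |f′(x)| ≤ 2a²b; (2) f′ is continuously differentiable with sup_{x∈ℝ} |f″(x)| ≤ 3a²; (3) f″ is differentiable at every point of ℝ∖{−b,−a,a,b} and |f‴(x)| ≤ 6a for all x ∈ ℝ∖{−b,−a,a,b}. -/

import Mathlib

/-- The quartic loss `h(x) = (x² - 1)² / 4`. -/
noncomputable def hq (x : ℝ) : ℝ := (x ^ 2 - 1) ^ 2 / 4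

/-- The clipped loss `f` with parameters `a < b`: it agrees with `hq` on `[-a, a]`,
is a cubic spline on `a < |x| ≤ b` (built from `h'(a) = a³ - a` and `h''(a) = 3a² - 1`),
and is linear for `|x| > b`. -/
noncomputable def fclip (a b x : ℝ) : ℝ :=
  if |x| ≤ a then hq x
  else if |x| ≤ b then
    hq a + (a ^ 3 - a) * (|x| - a) + ((3 * a ^ 2 - 1) / 2) * (|x| - a) ^ 2
      - ((3 * a ^ 2 - 1) / (6 * (b - a))) * (|x| - a) ^ 3
  else
    (hq a + (a ^ 3 - a) * (b - a) + ((3 * a ^ 2 - 1) / 2) * (b - a) ^ 2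
      - ((3 * a ^ 2 - 1) / (6 * (b - a))) * (b - a) ^ 3)
      + ((a ^ 3 - a) + ((b - a) / 2) * (3 * a ^ 2 - 1)) * (|x| - b)

/-! `fclip a b` is the even extension of a profile on `[0, ∞)` made of three polynomial pieces:
`h` on `[0, a]`, a cubic on `[a, b]` agreeing with `h` to second order at `a` and with vanishing
second derivative at `b`, and the tangent line of the cubic at `b`. Gluing one-sided derivatives
at the knots (and at `0`, where `h'` and `h'''` vanish) shows that `f'`, `f''` and, off the knots,
`f'''` are the odd/even extensions of the piecewise derivatives of the profile. The bounds are then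
checked piece by piece; on `[a, b]` the cubic's second derivative `(3a² - 1)(b - t)/(b - a)` is
nonnegative, so its slope lies between `h'(a) = a³ - a` and the slope of the tail. -/

open Set

theorem HasDerivAt.ite_le {F : Type*} [NormedAddCommGroup F] [NormedSpace ℝ F] {g k : ℝ → F}
    {g' k' : F} {c x : ℝ} (hg : HasDerivAt g g' x) (hk : HasDerivAt k k' x)
    (hc : x = c → g c = k c ∧ g' = k') :
    HasDerivAt (fun y => if y ≤ c then g y else k y) (if x ≤ c then g' else k') x := by
  rcases lt_trichotomy x c with hlt | rfl | hgt
  · rw [if_pos hlt.le]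
    refine hg.congr_of_eventuallyEq ?_
    filter_upwards [Iio_mem_nhds hlt] with y hy using if_pos (le_of_lt hy)
  · obtain ⟨hval, hder⟩ := hc rfl
    rw [if_pos le_rfl]
    have hleft : HasDerivWithinAt (fun y => if y ≤ x then g y else k y) g' (Iic x) x :=
      hg.hasDerivWithinAt.congr (fun y hy => if_pos hy) (if_pos le_rfl)
    have heq : EqOn (fun y => if y ≤ x then g y else k y) k (Ici x) := fun y hy => by
      dsimp only
      rcases (mem_Ici.1 hy).eq_or_lt with rfl | hxy
      · rw [if_pos le_rfl, hval]
      · exact if_neg (not_le.2 hxy)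
    have hright : HasDerivWithinAt (fun y => if y ≤ x then g y else k y) g' (Ici x) x :=
      hder ▸ hk.hasDerivWithinAt.congr heq (heq self_mem_Ici)
    simpa only [Iic_union_Ici, hasDerivWithinAt_univ] using hleft.union hright
  · rw [if_neg (not_le.2 hgt)]
    refine hk.congr_of_eventuallyEq ?_
    filter_upwards [Ioi_mem_nhds hgt] with y hy using if_neg (not_le.2 hy)

noncomputable def evenExt (g : ℝ → ℝ) (x : ℝ) : ℝ := if x ≤ 0 then g (-x) else g x

noncomputable def oddExt (g : ℝ → ℝ) (x : ℝ) : ℝ := if x ≤ 0 then -g (-x) else g x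

section Extensions

variable {g g' : ℝ → ℝ} {x : ℝ}

theorem evenExt_eq_comp_abs (g : ℝ → ℝ) (x : ℝ) : evenExt g x = g |x| := by
  rcases le_or_gt x 0 with hx | hx
  · rw [evenExt, if_pos hx, abs_of_nonpos hx]
  · rw [evenExt, if_neg (not_le.2 hx), abs_of_pos hx]

theorem Continuous.evenExt (hg : Continuous g) : Continuous (evenExt g) := by
  rw [funext (evenExt_eq_comp_abs g)]
  exact hg.comp continuous_abs

theorem abs_oddExt (g : ℝ → ℝ) (x : ℝ) : |oddExt g x| = |g (|x|)| := by
  rcases le_or_gt x 0 with hx | hx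
  · rw [oddExt, if_pos hx, abs_neg, abs_of_nonpos hx]
  · rw [oddExt, if_neg (not_le.2 hx), abs_of_pos hx]

theorem hasDerivAt_evenExt (hneg : HasDerivAt g (g' (-x)) (-x)) (hpos : HasDerivAt g (g' x) x)
    (h0 : g' 0 = 0) : HasDerivAt (evenExt g) (oddExt g' x) x := by
  have hrefl : HasDerivAt (fun y => g (-y)) (-g' (-x)) x :=
    (hneg.comp x (hasDerivAt_neg x)).congr_deriv (by ring)
  exact hrefl.ite_le hpos fun hx => by subst hx; simp [h0]

theorem hasDerivAt_oddExt (hneg : HasDerivAt g (g' (-x)) (-x)) (hpos : HasDerivAt g (g' x) x)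
    (h0 : g 0 = 0) : HasDerivAt (oddExt g) (evenExt g' x) x := by
  have hrefl : HasDerivAt (fun y => -g (-y)) (g' (-x)) x :=
    (hneg.comp x (hasDerivAt_neg x)).neg.congr_deriv (by ring)
  exact hrefl.ite_le hpos fun hx => by subst hx; simp [h0]

end Extensions

namespace ClippedLoss

variable (a b : ℝ)

noncomputable def spline (t : ℝ) : ℝ :=
  hq a + (a ^ 3 - a) * (t - a) + ((3 * a ^ 2 - 1) / 2) * (t - a) ^ 2
    - ((3 * a ^ 2 - 1) / (6 * (b - a))) * (t - a) ^ 3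

noncomputable def spline' (t : ℝ) : ℝ :=
  (a ^ 3 - a) + (3 * a ^ 2 - 1) * (t - a) - ((3 * a ^ 2 - 1) / (2 * (b - a))) * (t - a) ^ 2

noncomputable def spline'' (t : ℝ) : ℝ := (3 * a ^ 2 - 1) * (b - t) / (b - a)

noncomputable def tailSlope : ℝ := (a ^ 3 - a) + ((b - a) / 2) * (3 * a ^ 2 - 1)

noncomputable def profile (t : ℝ) : ℝ :=
  if t ≤ a then hq t else if t ≤ b then spline a b t else spline a b b + tailSlope a b * (t - b)

noncomputable def profile' (t : ℝ) : ℝ :=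
  if t ≤ a then t ^ 3 - t else if t ≤ b then spline' a b t else tailSlope a b

noncomputable def profile'' (t : ℝ) : ℝ :=
  if t ≤ a then 3 * t ^ 2 - 1 else if t ≤ b then spline'' a b t else 0

noncomputable def profile''' (t : ℝ) : ℝ :=
  if t ≤ a then 6 * t else if t ≤ b then -((3 * a ^ 2 - 1) / (b - a)) else 0

theorem fclip_eq_evenExt : fclip a b = evenExt (profile a b) := by
  funext x
  have hq_abs : hq |x| = hq x := by simp only [hq, sq_abs]
  rw [evenExt_eq_comp_abs, fclip, profile, hq_abs]
  rfl

variable {a b}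

theorem hasDerivAt_hq (t : ℝ) : HasDerivAt hq (t ^ 3 - t) t :=
  (((hasDerivAt_pow 2 t).sub_const 1).pow 2).div_const 4 |>.congr_deriv (by push_cast; ring)

theorem hasDerivAt_cube_sub (t : ℝ) : HasDerivAt (fun t => t ^ 3 - t) (3 * t ^ 2 - 1) t :=
  (hasDerivAt_pow 3 t).sub (hasDerivAt_id t) |>.congr_deriv (by push_cast; ring)

theorem hasDerivAt_three_mul_sq_sub (t : ℝ) :
    HasDerivAt (fun t => 3 * t ^ 2 - 1) (6 * t) t :=
  ((hasDerivAt_pow 2 t).const_mul 3).sub_const 1 |>.congr_deriv (by push_cast; ring)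

theorem hasDerivAt_tail (t : ℝ) :
    HasDerivAt (fun t => spline a b b + tailSlope a b * (t - b)) (tailSlope a b) t :=
  (((hasDerivAt_id t).sub_const b).const_mul _).const_add _ |>.congr_deriv (mul_one _)

theorem hasDerivAt_spline (hab : a ≠ b) (t : ℝ) :
    HasDerivAt (spline a b) (spline' a b t) t := by
  have hx := (hasDerivAt_id t).sub_const a
  refine ((((hx.const_mul _).const_add _).add ((hx.pow 2).const_mul _)).sub
    ((hx.pow 3).const_mul _)).congr_deriv ?_
  have : b - a ≠ 0 := sub_ne_zero.2 hab.symm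
  simp only [spline', id, Nat.cast_ofNat]
  field_simp
  ring

theorem hasDerivAt_spline' (hab : a ≠ b) (t : ℝ) :
    HasDerivAt (spline' a b) (spline'' a b t) t := by
  have hx := (hasDerivAt_id t).sub_const a
  refine (((hx.const_mul _).const_add _).sub ((hx.pow 2).const_mul _)).congr_deriv ?_
  have : b - a ≠ 0 := sub_ne_zero.2 hab.symm
  simp only [spline'', id, Nat.cast_ofNat]
  field_simp
  ring

theorem hasDerivAt_spline'' (t : ℝ) :
    HasDerivAt (spline'' a b) (-((3 * a ^ 2 - 1) / (b - a))) t :=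
  (((hasDerivAt_id t).const_sub b).const_mul _).div_const _ |>.congr_deriv (by ring)

theorem spline_left : spline a b a = hq a := by simp [spline]

theorem spline'_left : spline' a b a = a ^ 3 - a := by simp [spline']

theorem spline'_right (hab : a ≠ b) : spline' a b b = tailSlope a b := by
  have : b - a ≠ 0 := sub_ne_zero.2 hab.symm
  simp only [spline', tailSlope]
  field_simp
  ring

theorem spline''_left (hab : a ≠ b) : spline'' a b a = 3 * a ^ 2 - 1 := by
  simp [spline'', sub_ne_zero.2 hab.symm]

theorem spline''_right : spline'' a b b = 0 := by simp [spline'']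

theorem hasDerivAt_profile (hab : a < b) (t : ℝ) :
    HasDerivAt (profile a b) (profile' a b t) t := by
  have hinner := (hasDerivAt_spline hab.ne t).ite_le (hasDerivAt_tail (a := a) (b := b) t)
    (c := b) fun ht => by subst ht; simp [spline'_right hab.ne]
  exact (hasDerivAt_hq t).ite_le hinner fun ht => by
    subst ht; simp [hab.le, spline_left, spline'_left]

theorem hasDerivAt_profile' (hab : a < b) (t : ℝ) :
    HasDerivAt (profile' a b) (profile'' a b t) t := by
  have hinner := (hasDerivAt_spline' hab.ne t).ite_le (hasDerivAt_const t (tailSlope a b))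
    (c := b) fun ht => by subst ht; simp [spline'_right hab.ne, spline''_right]
  exact (hasDerivAt_cube_sub t).ite_le hinner fun ht => by
    subst ht; simp [hab.le, spline'_left, spline''_left hab.ne]

theorem hasDerivAt_profile'' {t : ℝ} (hta : t ≠ a) (htb : t ≠ b) :
    HasDerivAt (profile'' a b) (profile''' a b t) t :=
  (hasDerivAt_three_mul_sq_sub t).ite_le
    ((hasDerivAt_spline'' t).ite_le (hasDerivAt_const t 0) fun ht => absurd ht htb)
    fun ht => absurd ht hta

theorem continuous_profile'' (hab : a < b) : Continuous (profile'' a b) := by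
  have hinner : Continuous fun t => if t ≤ b then spline'' a b t else 0 :=
    Continuous.if_le (by unfold spline''; fun_prop) continuous_const continuous_id
      continuous_const fun t ht => by rw [ht, spline''_right]
  exact Continuous.if_le (by fun_prop) hinner continuous_id continuous_const fun t ht => by
    rw [ht]; simp [hab.le, spline''_left hab.ne]

theorem spline'_sub_cube_sub (hab : a ≠ b) (t : ℝ) :
    spline' a b t - (a ^ 3 - a) =
      (3 * a ^ 2 - 1) * (t - a) * (2 * (b - a) - (t - a)) / (2 * (b - a)) := by
  have : b - a ≠ 0 := sub_ne_zero.2 hab.symm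
  simp only [spline']
  field_simp
  ring

theorem tailSlope_sub_spline' (hab : a ≠ b) (t : ℝ) :
    tailSlope a b - spline' a b t = (3 * a ^ 2 - 1) * (b - t) ^ 2 / (2 * (b - a)) := by
  have : b - a ≠ 0 := sub_ne_zero.2 hab.symm
  simp only [spline', tailSlope]
  field_simp
  ring

section Bounds

variable (ha : 1 ≤ a) (hab : 2 * a ≤ b)
include ha hab

theorem abs_profile'_le {t : ℝ} (ht : 0 ≤ t) : |profile' a b t| ≤ 2 * a ^ 2 * b := by
  have hlt : a < b := by linarith
  have hba : 0 < b - a := by linarith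
  have hcurv : 0 ≤ 3 * a ^ 2 - 1 := by nlinarith
  have hcube : 0 ≤ a ^ 3 - a := by nlinarith
  have ha3 : a ^ 3 ≤ a ^ 2 * b := by nlinarith [mul_nonneg (sq_nonneg a) hba.le]
  have hslope : tailSlope a b ≤ 2 * a ^ 2 * b := by unfold tailSlope; nlinarith
  unfold profile'
  split_ifs with hta htb
  · have ht3 : t ^ 3 ≤ a ^ 3 := pow_le_pow_left₀ ht hta 3
    have ht3' : 0 ≤ t ^ 3 := by positivity
    rw [abs_le]; constructor <;> nlinarith
  · have hlow : a ^ 3 - a ≤ spline' a b t := by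
      rw [← sub_nonneg, spline'_sub_cube_sub hlt.ne]
      exact div_nonneg (mul_nonneg (mul_nonneg hcurv (by linarith)) (by linarith)) (by linarith)
    have hhigh : spline' a b t ≤ tailSlope a b := by
      rw [← sub_nonneg, tailSlope_sub_spline' hlt.ne]
      positivity
    rw [abs_of_nonneg (by linarith)]
    linarith
  · rw [abs_of_nonneg (by unfold tailSlope; positivity)]
    exact hslope

theorem abs_profile''_le {t : ℝ} (ht : 0 ≤ t) : |profile'' a b t| ≤ 3 * a ^ 2 := by
  have hba : 0 < b - a := by linarith
  have hcurv : 0 ≤ 3 * a ^ 2 - 1 := by nlinarith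
  unfold profile''
  split_ifs with hta htb
  · rw [abs_le]; constructor <;> nlinarith
  · have hfrac : (b - t) / (b - a) ≤ 1 := (div_le_one hba).2 (by linarith)
    rw [spline'', mul_div_assoc, abs_of_nonneg (by positivity)]
    nlinarith
  · simp only [abs_zero]
    positivity

theorem abs_profile'''_le {t : ℝ} (ht : 0 ≤ t) : |profile''' a b t| ≤ 6 * a := by
  have hba : 0 < b - a := by linarith
  unfold profile'''
  split_ifs with hta htb
  · rw [abs_of_nonneg (by linarith)]
    linarith
  · rw [abs_neg, abs_div, abs_of_pos hba, div_le_iff₀ hba, abs_of_nonneg (by nlinarith)]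
    nlinarith
  · simp only [abs_zero]
    positivity

end Bounds

theorem profile'_zero (ha : 0 ≤ a) : profile' a b 0 = 0 := by simp [profile', ha]

theorem profile'''_zero (ha : 0 ≤ a) : profile''' a b 0 = 0 := by simp [profile''', ha]

theorem hasDerivAt_fclip (ha : 0 ≤ a) (hab : a < b) (x : ℝ) :
    HasDerivAt (fclip a b) (oddExt (profile' a b) x) x :=
  fclip_eq_evenExt a b ▸
    hasDerivAt_evenExt (hasDerivAt_profile hab _) (hasDerivAt_profile hab _) (profile'_zero ha)

theorem hasDerivAt_oddExt_profile' (ha : 0 ≤ a) (hab : a < b) (x : ℝ) :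
    HasDerivAt (oddExt (profile' a b)) (evenExt (profile'' a b) x) x :=
  hasDerivAt_oddExt (hasDerivAt_profile' hab _) (hasDerivAt_profile' hab _) (profile'_zero ha)

theorem hasDerivAt_evenExt_profile'' (ha : 0 ≤ a) {x : ℝ}
    (hx : x ∉ ({-b, -a, a, b} : Set ℝ)) :
    HasDerivAt (evenExt (profile'' a b)) (oddExt (profile''' a b) x) x := by
  simp only [Set.mem_insert_iff, Set.mem_singleton_iff, not_or] at hx
  obtain ⟨hxnb, hxna, hxa, hxb⟩ := hx
  exact hasDerivAt_evenExt
    (hasDerivAt_profile'' (fun h => hxna (by linarith)) (fun h => hxnb (by linarith)))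
    (hasDerivAt_profile'' hxa hxb) (profile'''_zero ha)

end ClippedLoss

open ClippedLoss

theorem clipped_loss_derivative_bounds :
    ∃ A : ℝ, 1 ≤ A ∧ ∀ a b : ℝ, A ≤ a → 2 * a ≤ b →
      (ContDiff ℝ 1 (fclip a b) ∧ ∀ x : ℝ, |deriv (fclip a b) x| ≤ 2 * a ^ 2 * b) ∧
      (ContDiff ℝ 1 (deriv (fclip a b)) ∧
        ∀ x : ℝ, |deriv (deriv (fclip a b)) x| ≤ 3 * a ^ 2) ∧
      (∀ x : ℝ, x ∉ ({-b, -a, a, b} : Set ℝ) →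
        DifferentiableAt ℝ (deriv (deriv (fclip a b))) x ∧
          |deriv (deriv (deriv (fclip a b))) x| ≤ 6 * a) := by
  refine ⟨1, le_rfl, fun a b ha hab => ?_⟩
  have ha0 : 0 ≤ a := by linarith
  have hlt : a < b := by linarith
  have h1 := hasDerivAt_fclip ha0 hlt
  have h2 := hasDerivAt_oddExt_profile' ha0 hlt
  have hd1 : deriv (fclip a b) = oddExt (profile' a b) := funext fun x => (h1 x).deriv
  have hd2 : deriv (oddExt (profile' a b)) = evenExt (profile'' a b) :=
    funext fun x => (h2 x).deriv
  have hdiff2 : Differentiable ℝ (oddExt (profile' a b)) := fun x => (h2 x).differentiableAt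
  rw [hd1, hd2]
  refine ⟨⟨?_, fun x => ?_⟩, ⟨?_, fun x => ?_⟩, fun x hx => ?_⟩
  · rw [contDiff_one_iff_deriv, hd1]
    exact ⟨fun x => (h1 x).differentiableAt, hdiff2.continuous⟩
  · rw [abs_oddExt]
    exact abs_profile'_le ha hab (abs_nonneg x)
  · rw [contDiff_one_iff_deriv, hd2]
    exact ⟨hdiff2, (continuous_profile'' hlt).evenExt⟩
  · rw [evenExt_eq_comp_abs]
    exact abs_profile''_le ha hab (abs_nonneg x)
  · have h3 := hasDerivAt_evenExt_profile'' ha0 hx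
    rw [h3.deriv, abs_oddExt]
    exact ⟨h3.differentiableAt, abs_profile'''_le ha hab (abs_nonneg x)⟩
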